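/- Let f : ℝ → ℂ be a continuous 2π-periodic function whose Fourier coefficients satisfy f̂(k) = 0 for all k < 0. Then the zeroth Fourier coefficient of e^f equals e^{f̂(0)}: (1/(2π)) ∫₀^{2π} e^{f(θ)} dθ = exp( (1/(2π)) ∫₀^{2π} f(θ) dθ ). -/

import Mathlib

noncomputable section

/-- The `k`-th Fourier coefficient `f̂(k) = (1/2π) ∫₀^{2π} f(θ) e^{-ikθ} dθ` of a
(`2π`-periodic) function `f : ℝ → ℂ`. -/
def fc (f : ℝ → ℂ) (k : ℤ) : ℂ :=
  (1 / (2 * (Real.pi : ℂ))) *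
    ∫ θ in (0 : ℝ)..(2 * Real.pi), f θ * Complex.exp (-(Complex.I * (k : ℂ) * (θ : ℂ)))

/-! On continuous functions with no negative frequencies, `f ↦ f̂(0)` is multiplicative: by
Parseval, `(fg)^(n) = ∑ₖ f̂(k) ĝ(n - k)`, and for `n ≤ 0` only the term `k = n` can survive. So
this class is closed under products, `(fᵐ)^(0) = f̂(0)ᵐ`, and integrating the exponential series
of `f` term by term gives `(e^f)^(0) = e^{f̂(0)}`. -/

open MeasureTheory Complex AddCircle
open scoped ComplexConjugate

namespace AddCircle

variable {T : ℝ} [Fact (0 < T)]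

theorem fourierCoeff_zero_eq_integral (f : AddCircle T → ℂ) :
    fourierCoeff f 0 = ∫ t, f t ∂haarAddCircle := by
  simp [fourierCoeff]

theorem fourierCoeff_conj (f : AddCircle T → ℂ) (n : ℤ) :
    fourierCoeff (fun t => conj (f t)) n = conj (fourierCoeff f (-n)) := by
  simp only [fourierCoeff, smul_eq_mul, ← integral_conj, map_mul, neg_neg, fourier_neg]

theorem fourierCoeff_fourier_mul (f : AddCircle T → ℂ) (m n : ℤ) :
    fourierCoeff (⇑(fourier m) * f) n = fourierCoeff f (n - m) := by
  simp only [fourierCoeff, smul_eq_mul, Pi.mul_apply, ← mul_assoc, ← fourier_add, neg_sub',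
    sub_neg_eq_add]

theorem fourierCoeff_one (n : ℤ) :
    fourierCoeff (fun _ : AddCircle T => (1 : ℂ)) n = Pi.single (M := fun _ => ℂ) 0 1 n := by
  rw [show (fun _ : AddCircle T => (1 : ℂ)) = fourier 0 from funext fun _ => fourier_zero.symm,
    fourierCoeff_fourier]

theorem hasSum_fourierCoeff_neg_mul_fourierCoeff (f g : C(AddCircle T, ℂ)) :
    HasSum (fun n : ℤ => fourierCoeff f (-n) * fourierCoeff g n)
      (∫ t, f t * g t ∂haarAddCircle) := by
  have hrepr (h : C(AddCircle T, ℂ)) (n : ℤ) :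
      fourierBasis.repr (ContinuousMap.toLp 2 haarAddCircle ℂ h) n = fourierCoeff h n := by
    rw [fourierBasis_repr, fourierCoeff_toLp]
  have key := fourierBasis.hasSum_inner_mul_inner
    (ContinuousMap.toLp 2 haarAddCircle ℂ (star f)) (ContinuousMap.toLp 2 haarAddCircle ℂ g)
  simp only [← fourierBasis.repr_apply_apply, ← inner_conj_symm (𝕜 := ℂ) _ (fourierBasis _),
    hrepr, ContinuousMap.inner_toLp, ContinuousMap.coe_star] at key
  simpa [Pi.star_def, fourierCoeff_conj, mul_comm] using key

theorem hasSum_fourierCoeff_mul (f g : C(AddCircle T, ℂ)) (n : ℤ) :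
    HasSum (fun k : ℤ => fourierCoeff f k * fourierCoeff g (n - k))
      (fourierCoeff (⇑(f * g)) n) := by
  have key := hasSum_fourierCoeff_neg_mul_fourierCoeff f (fourier (-n) * g)
  simp only [ContinuousMap.coe_mul, fourierCoeff_fourier_mul, sub_neg_eq_add] at key
  rw [← (Equiv.neg ℤ).hasSum_iff]
  convert key using 1
  · ext k
    simp [sub_eq_neg_add]
  · simp only [fourierCoeff, smul_eq_mul, ContinuousMap.coe_mul, Pi.mul_apply]
    congr 1 with t
    ring

theorem fourierCoeff_mul_of_nonpos {f g : C(AddCircle T, ℂ)}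
    (hf : ∀ k < 0, fourierCoeff f k = 0) (hg : ∀ k < 0, fourierCoeff g k = 0) {n : ℤ}
    (hn : n ≤ 0) : fourierCoeff (⇑(f * g)) n = fourierCoeff f n * fourierCoeff g 0 := by
  refine ((hasSum_fourierCoeff_mul f g n).unique (hasSum_single n fun k hk => ?_)).trans
    (by rw [sub_self])
  rcases lt_or_ge k 0 with hk0 | hk0
  · rw [hf k hk0, zero_mul]
  · rw [hg (n - k) (by omega), mul_zero]

variable (T) in
def nonnegFreqSubmonoid : Submonoid C(AddCircle T, ℂ) where
  carrier := {f | ∀ n < 0, fourierCoeff f n = 0}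
  mul_mem' {f g} hf hg n hn := by
    rw [fourierCoeff_mul_of_nonpos hf hg hn.le, hf n hn, zero_mul]
  one_mem' n hn := by
    rw [ContinuousMap.coe_one, Pi.one_def, fourierCoeff_one, Pi.single_eq_of_ne hn.ne]

theorem fourierCoeff_zero_pow {f : C(AddCircle T, ℂ)} (hf : f ∈ nonnegFreqSubmonoid T) (m : ℕ) :
    fourierCoeff (⇑(f ^ m)) 0 = fourierCoeff f 0 ^ m := by
  induction m with
  | zero =>
    rw [pow_zero, pow_zero, ContinuousMap.coe_one, Pi.one_def, fourierCoeff_one, Pi.single_eq_same]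
  | succ m ih =>
    rw [pow_succ', fourierCoeff_mul_of_nonpos hf (pow_mem hf m) le_rfl, ih, pow_succ']

theorem integral_exp_eq_exp_integral {f : C(AddCircle T, ℂ)} (hf : f ∈ nonnegFreqSubmonoid T) :
    ∫ t, exp (f t) ∂haarAddCircle = exp (∫ t, f t ∂haarAddCircle) := by
  have hint (m : ℕ) : Integrable (fun t => f t ^ m / m.factorial) haarAddCircle :=
    ((f.continuous.pow m).div_const _).integrable_of_hasCompactSupport
      (HasCompactSupport.of_compactSpace _)
  have hbound (m : ℕ) : ∫ t, ‖f t ^ m / m.factorial‖ ∂haarAddCircle ≤ ‖f‖ ^ m / m.factorial := by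
    refine (integral_mono (hint m).norm (integrable_const (‖f‖ ^ m / m.factorial))
      fun t => ?_).trans_eq (by simp)
    rw [norm_div, norm_pow, Complex.norm_natCast]
    gcongr
    exact f.norm_coe_le_norm t
  have hsum := hasSum_integral_of_summable_integral_norm hint
    ((Real.summable_pow_div_factorial ‖f‖).of_nonneg_of_le (fun m => integral_nonneg fun _ =>
      norm_nonneg _) hbound)
  simp only [exp_eq_exp_ℂ, ← (NormedSpace.expSeries_div_hasSum_exp _).tsum_eq, ← hsum.tsum_eq]
  congr 1 with m
  rw [integral_div, ← fourierCoeff_zero_eq_integral ⇑f, ← fourierCoeff_zero_pow hf,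
    fourierCoeff_zero_eq_integral]
  simp

end AddCircle

instance Real.fact_zero_lt_two_pi : Fact (0 < 2 * Real.pi) := ⟨Real.two_pi_pos⟩

theorem fc_zero (g : ℝ → ℂ) :
    fc g 0 = (1 / (2 * (Real.pi : ℂ))) * ∫ θ in (0 : ℝ)..(2 * Real.pi), g θ := by
  simp [fc]

theorem fc_eq_fourierCoeff_lift {g : ℝ → ℂ} (hg : Function.Periodic g (2 * Real.pi)) (k : ℤ) :
    fc g k = fourierCoeff hg.lift k := by
  have hπ : (Real.pi : ℂ) ≠ 0 := ofReal_ne_zero.mpr Real.pi_ne_zero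
  have hpt (θ : ℝ) : fourier (-k) (θ : AddCircle (2 * Real.pi)) • hg.lift θ
      = g θ * exp (-(I * k * θ)) := by
    rw [Function.Periodic.lift_coe, fourier_coe_apply, smul_eq_mul, mul_comm]
    congr 2
    push_cast
    field_simp
  rw [fourierCoeff_eq_intervalIntegral _ k 0, zero_add, fc]
  simp_rw [hpt]
  rw [real_smul]
  push_cast
  ring

theorem stmt_12 (f : ℝ → ℂ) (hf : Continuous f)
    (hper : ∀ θ, f (θ + 2 * Real.pi) = f θ)
    (hcoef : ∀ k : ℤ, k < 0 → fc f k = 0) :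
    (1 / (2 * (Real.pi : ℂ))) * ∫ θ in (0 : ℝ)..(2 * Real.pi), Complex.exp (f θ)
      = Complex.exp ((1 / (2 * (Real.pi : ℂ))) * ∫ θ in (0 : ℝ)..(2 * Real.pi), f θ) := by
  have hperf : Function.Periodic f (2 * Real.pi) := hper
  have hperexp : Function.Periodic (fun θ => exp (f θ)) (2 * Real.pi) := fun θ => by
    simp only [hper]
  let F : C(AddCircle (2 * Real.pi), ℂ) := ⟨hperf.lift, continuous_coinduced_dom.mpr hf⟩
  have hF : F ∈ nonnegFreqSubmonoid _ := fun k hk =>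
    (fc_eq_fourierCoeff_lift hperf k).symm.trans (hcoef k hk)
  have hexpF : hperexp.lift = fun t => exp (F t) :=
    funext fun t => QuotientAddGroup.induction_on t fun _ => rfl
  rw [← fc_zero, ← fc_zero, fc_eq_fourierCoeff_lift hperexp, fc_eq_fourierCoeff_lift hperf, hexpF,
    fourierCoeff_zero_eq_integral, fourierCoeff_zero_eq_integral]
  exact integral_exp_eq_exp_integral hF

end
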